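/- For every real z > 0, ∫₀^∞ K₀( 2z cosh(t) ) cosh(t) dt = (1/2) K_{1/2}(z)², and this common value equals (π/(4z)) e^{−2z}. -/

import Mathlib

open MeasureTheory Real

/-- Modified Bessel function of the second kind, integral representation. -/
noncomputable def besselK (ν z : ℝ) : ℝ :=
  ∫ t in Set.Ioi (0:ℝ), Real.exp (-z * Real.cosh t) * Real.cosh (ν * t)

/-!
Substituting `x = sinh t`, and `y = √(1 + x²) sinh s` in the integral defining
`K₀(2z√(1 + x²))`, turns the left-hand side into the integral over the positive quadrant of
the radial function `e^{-2z√(1+x²+y²)} / √(1+x²+y²)`. In polar coordinates its integral over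
the plane is `2π ∫₀^∞ r e^{-2z√(1+r²)} / √(1+r²) dr = π e^{-2z} / z`, the integrand having the
explicit primitive `-e^{-2z√(1+r²)} / (2z)`; the quadrant carries a quarter of it.
On the other side, `x = sinh (t/2)` turns `K_{1/2}(z)` into the Gaussian integral
`2 e^{-z} ∫₀^∞ e^{-2zx²} dx = e^{-z} √(π/(2z))`.
-/

open Set Filter Topology

lemma integral_Ioi_comp_mul_sinh {a c : ℝ} (ha : 0 < a) (hc : 0 < c) (g : ℝ → ℝ) :
    ∫ t in Ioi 0, a * c * cosh (a * t) * g (c * sinh (a * t)) = ∫ x in Ioi 0, g x := by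
  have hmono : StrictMono fun t => c * sinh (a * t) :=
    (sinh_strictMono.comp (strictMono_mul_left_of_pos ha)).const_mul hc
  have himage : (fun t => c * sinh (a * t)) '' Ioi 0 = Ioi 0 := by
    ext x
    refine ⟨?_, fun hx => ⟨arsinh (x / c) / a, ?_, ?_⟩⟩
    · rintro ⟨t, ht, rfl⟩
      exact mul_pos hc (sinh_pos_iff.2 (mul_pos ha ht))
    · exact div_pos (arsinh_pos_iff.2 (div_pos hx hc)) ha
    · simp only
      rw [mul_div_cancel₀ _ ha.ne', sinh_arsinh, mul_div_cancel₀ _ hc.ne']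
  have hderiv : ∀ t ∈ Ioi (0 : ℝ), HasDerivWithinAt (fun t => c * sinh (a * t))
      (a * c * cosh (a * t)) (Ioi 0) t := fun t _ => by
    refine (((hasDerivAt_id' t).const_mul a).sinh.const_mul c).hasDerivWithinAt.congr_deriv ?_
    ring
  have hsubst := integral_image_eq_integral_abs_deriv_smul measurableSet_Ioi hderiv
    hmono.injective.injOn g
  rw [himage] at hsubst
  rw [hsubst]
  refine setIntegral_congr_fun measurableSet_Ioi fun t _ => ?_
  rw [smul_eq_mul, abs_of_pos (by positivity)]

lemma sqrt_sq_add_sq_mul_sinh {c : ℝ} (hc : 0 ≤ c) (t : ℝ) :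
    √(c ^ 2 + (c * sinh t) ^ 2) = c * cosh t := by
  rw [← sqrt_sq (by positivity : 0 ≤ c * cosh t), mul_pow, mul_pow, cosh_sq']
  ring_nf

-- For `z ≤ 0` both sides are the junk value `0`.
lemma besselK_half (z : ℝ) : besselK (1 / 2) z = exp (-z) * √(π / (2 * z)) := by
  have hcosh : ∀ t, cosh t = 1 + 2 * sinh (1 / 2 * t) ^ 2 := fun t => by
    conv_lhs => rw [show t = 2 * (1 / 2 * t) by ring, cosh_two_mul, cosh_sq']
    ring
  have hgauss : ∫ x in Ioi 0, 2 * exp (-z * (1 + 2 * x ^ 2)) = exp (-z) * √(π / (2 * z)) := by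
    simp only [mul_add, mul_one, exp_add, ← mul_assoc, integral_const_mul]
    rw [show -z * 2 = -(2 * z) by ring, integral_gaussian_Ioi]
    ring
  rw [← hgauss, ← integral_Ioi_comp_mul_sinh (by norm_num : (0 : ℝ) < 1 / 2) one_pos]
  refine setIntegral_congr_fun measurableSet_Ioi fun t _ => ?_
  rw [hcosh, one_mul]
  ring

lemma besselK_zero_mul_eq_integral (a : ℝ) {c : ℝ} (hc : 0 < c) :
    besselK 0 (a * c) = ∫ y in Ioi 0, exp (-a * √(c ^ 2 + y ^ 2)) / √(c ^ 2 + y ^ 2) := by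
  rw [← integral_Ioi_comp_mul_sinh one_pos hc]
  refine setIntegral_congr_fun measurableSet_Ioi fun t _ => ?_
  have : 0 < c * cosh t := by positivity
  simp only [one_mul, zero_mul, cosh_zero, mul_one, sqrt_sq_add_sq_mul_sinh hc.le]
  field_simp

lemma integral_besselK_zero_mul_cosh_eq_integral_Ioi_Ioi (a : ℝ) :
    ∫ t in Ioi 0, besselK 0 (a * cosh t) * cosh t =
      ∫ x in Ioi 0, ∫ y in Ioi 0, exp (-a * √(1 + (x ^ 2 + y ^ 2))) / √(1 + (x ^ 2 + y ^ 2)) := by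
  rw [← integral_Ioi_comp_mul_sinh one_pos one_pos
    (fun x => ∫ y in Ioi 0, exp (-a * √(1 + (x ^ 2 + y ^ 2))) / √(1 + (x ^ 2 + y ^ 2)))]
  refine setIntegral_congr_fun measurableSet_Ioi fun t _ => ?_
  rw [besselK_zero_mul_eq_integral a (cosh_pos t), cosh_sq']
  simp only [one_mul, add_assoc]
  ring

lemma integral_Ioi_Ioi_comp_sq_add_sq (F : ℝ → ℝ)
    (hF : Integrable fun p : ℝ × ℝ => F (p.1 ^ 2 + p.2 ^ 2)) :
    ∫ x in Ioi 0, ∫ y in Ioi 0, F (x ^ 2 + y ^ 2) = (∫ p : ℝ × ℝ, F (p.1 ^ 2 + p.2 ^ 2)) / 4 := by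
  have heven : ∀ x, ∫ y, F (x ^ 2 + y ^ 2) = 2 * ∫ y in Ioi 0, F (x ^ 2 + y ^ 2) := fun x => by
    have := integral_comp_abs (f := fun y => F (x ^ 2 + y ^ 2))
    simpa only [sq_abs] using this
  have heven' := integral_comp_abs (f := fun x => ∫ y in Ioi 0, F (x ^ 2 + y ^ 2))
  simp only [sq_abs] at heven'
  rw [Measure.volume_eq_prod, integral_prod _ hF]
  simp only [heven, integral_const_mul, heven']
  ring

lemma integral_comp_sq_add_sq (F : ℝ → ℝ) :
    ∫ p : ℝ × ℝ, F (p.1 ^ 2 + p.2 ^ 2) = 2 * π * ∫ r in Ioi 0, r * F (r ^ 2) := by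
  rw [← integral_comp_polarCoord_symm, polarCoord_target, Measure.volume_eq_prod,
    ← Measure.prod_restrict]
  have hpolar : ∀ p : ℝ × ℝ, p.1 • F ((polarCoord.symm p).1 ^ 2 + (polarCoord.symm p).2 ^ 2)
      = p.1 * F (p.1 ^ 2) := fun p => by
    rw [polarCoord_symm_apply, smul_eq_mul, mul_pow, mul_pow, ← mul_add, cos_sq_add_sin_sq,
      mul_one]
  simp only [hpolar]
  rw [integral_fun_fst (fun r => r * F (r ^ 2)), measureReal_restrict_apply_univ,
    Real.volume_real_Ioo_of_le (by linarith [pi_pos]), smul_eq_mul]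
  ring

lemma integral_Ioi_mul_exp_neg_mul_sqrt_one_add_sq {a : ℝ} (ha : 0 < a) :
    ∫ r in Ioi 0, r * (exp (-a * √(1 + r ^ 2)) / √(1 + r ^ 2)) = exp (-a) / a := by
  have hderiv : ∀ r : ℝ, HasDerivAt (fun r => -exp (-a * √(1 + r ^ 2)) / a)
      (r * (exp (-a * √(1 + r ^ 2)) / √(1 + r ^ 2))) r := fun r => by
    have hs : HasDerivAt (fun r : ℝ => √(1 + r ^ 2)) (r / √(1 + r ^ 2)) r := by
      refine (((hasDerivAt_pow 2 r).const_add 1).sqrt (by positivity)).congr_deriv ?_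
      field_simp
      ring
    refine (((hs.const_mul (-a)).exp).fun_neg.div_const a).congr_deriv ?_
    field_simp
  have hlim : Tendsto (fun r : ℝ => -exp (-a * √(1 + r ^ 2)) / a) atTop (𝓝 0) := by
    have hsqrt : Tendsto (fun r : ℝ => √(1 + r ^ 2)) atTop atTop :=
      tendsto_sqrt_atTop.comp <| tendsto_atTop_add_const_left _ _ <|
        tendsto_pow_atTop two_ne_zero
    simpa using ((tendsto_exp_atBot.comp
      (hsqrt.const_mul_atTop_of_neg (neg_neg_of_pos ha))).neg).div_const a
  rw [integral_Ioi_of_hasDerivAt_of_nonneg (hderiv 0).continuousAt.continuousWithinAt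
    (fun r _ => hderiv r) (fun r hr => by have : 0 < r := hr; positivity) hlim]
  simp [neg_div]

lemma integral_besselK_zero_mul_cosh {a : ℝ} (ha : 0 < a) :
    ∫ t in Ioi 0, besselK 0 (a * cosh t) * cosh t = π / (2 * a) * exp (-a) := by
  set F : ℝ → ℝ := fun u => exp (-a * √(1 + u)) / √(1 + u)
  have hplane : ∫ p : ℝ × ℝ, F (p.1 ^ 2 + p.2 ^ 2) = 2 * π * (exp (-a) / a) :=
    (integral_comp_sq_add_sq F).trans
      (by rw [integral_Ioi_mul_exp_neg_mul_sqrt_one_add_sq ha])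
  -- The polar formula needs no integrability, so it yields integrability for free.
  have hF : Integrable fun p : ℝ × ℝ => F (p.1 ^ 2 + p.2 ^ 2) :=
    .of_integral_ne_zero (by rw [hplane]; positivity)
  rw [integral_besselK_zero_mul_cosh_eq_integral_Ioi_Ioi,
    integral_Ioi_Ioi_comp_sq_add_sq F hF, hplane]
  field_simp
  ring

theorem integral_besselK_zero_cosh (z : ℝ) (hz : 0 < z) :
    (∫ t in Set.Ioi (0:ℝ), besselK 0 (2 * z * Real.cosh t) * Real.cosh t)
        = (1 / 2) * (besselK (1/2) z) ^ 2 ∧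
      (1 / 2) * (besselK (1/2) z) ^ 2 = (π / (4 * z)) * Real.exp (-2 * z) := by
  have hhalf : (1 / 2) * (besselK (1/2) z) ^ 2 = (π / (4 * z)) * Real.exp (-2 * z) := by
    rw [besselK_half, mul_pow, sq_sqrt (by positivity), ← exp_nat_mul]
    field_simp
    ring_nf
  refine ⟨?_, hhalf⟩
  rw [hhalf, integral_besselK_zero_mul_cosh (by positivity)]
  field_simp
  ring_nf
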